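/- arXiv:1701.04426 — 2 statements merged into one kernel-verified Lean document; each statement's English description precedes it below -/
import Mathlib

section
/- For every integer N ≥ 1, all positive real link capacities ℓ_1, …, ℓ_{N+1}, and every schedule λ, the rate satisfies C^λ ≤ min_{i∈{1,…,N}} ℓ_i·ℓ_{i+1}/(ℓ_i + ℓ_{i+1}). -/
/-!
Link `i + 1` is active only when relay `i` transmits and link `i` only when it receives, so the
two links are never active together and their activity times `t, t'` satisfy `t + t' ≤ 1`.
A rate `r` then obeys `r / ℓ_i + r / ℓ_{i+1} ≤ t + t' ≤ 1`, i.e. `r ≤ ℓ_i ℓ_{i+1} / (ℓ_i + ℓ_{i+1})`.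
-/

open Finset

/-- Node state: node `0` always transmits (`true`), node `N+1` always receives (`false`),
and node `j` for `1 ≤ j ≤ N` takes the state of relay `j`. -/
def nodeState (N : ℕ) (s : Fin N → Bool) (j : ℕ) : Bool :=
  if j = 0 then true else if h : j - 1 < N then s ⟨j - 1, h⟩ else false

/-- Link `i` (from node `i-1` to node `i`) is active in state `s`. -/
def linkActive (N : ℕ) (s : Fin N → Bool) (i : ℕ) : Prop :=
  nodeState N s (i - 1) = true ∧ nodeState N s i = false

instance (N : ℕ) (s : Fin N → Bool) (i : ℕ) : Decidable (linkActive N s i) := by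
  unfold linkActive; infer_instance

/-- The total fraction of time `Σ_{s ∈ S_i} λ_s` in which link `i` is active. -/
noncomputable def linkTime (N : ℕ) (lam : (Fin N → Bool) → ℝ) (i : ℕ) : ℝ :=
  ∑ s ∈ Finset.univ.filter (fun s : Fin N → Bool => linkActive N s i), lam s

/-- The rate `C^λ = min_{i ∈ [1,N+1]} (Σ_{s ∈ S_i} λ_s) ℓ_i` of a schedule. -/
noncomputable def rate (N : ℕ) (ℓ : ℕ → ℝ) (lam : (Fin N → Bool) → ℝ) : ℝ :=
  (Finset.Icc 1 (N + 1)).inf' ⟨1, by simp⟩ (fun i => linkTime N lam i * ℓ i)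

theorem not_linkActive_and_linkActive_succ (N : ℕ) (s : Fin N → Bool) (i : ℕ) :
    ¬ (linkActive N s i ∧ linkActive N s (i + 1)) := by
  rintro ⟨⟨-, hreceives⟩, ⟨htransmits, -⟩⟩
  rw [Nat.add_sub_cancel, hreceives] at htransmits
  exact Bool.false_ne_true htransmits

theorem linkTime_add_linkTime_succ_le (N : ℕ) (lam : (Fin N → Bool) → ℝ) (hlam : ∀ s, 0 ≤ lam s)
    (i : ℕ) : linkTime N lam i + linkTime N lam (i + 1) ≤ ∑ s, lam s := by
  have hdisj : Disjoint (univ.filter fun s => linkActive N s i)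
      (univ.filter fun s => linkActive N s (i + 1)) :=
    disjoint_filter.2 fun s _ h h' => not_linkActive_and_linkActive_succ N s i ⟨h, h'⟩
  rw [linkTime, linkTime, ← sum_union hdisj]
  exact sum_le_univ_sum_of_nonneg hlam

theorem le_mul_div_add_of_le_mul_of_le_mul {r t t' a b : ℝ} (ha : 0 < a) (hb : 0 < b)
    (hr : r ≤ t * a) (hr' : r ≤ t' * b) (htt' : t + t' ≤ 1) : r ≤ a * b / (a + b) := by
  rw [le_div_iff₀ (add_pos ha hb)]
  calc r * (a + b) = r * b + r * a := by ring
    _ ≤ t * a * b + t' * b * a :=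
        add_le_add (mul_le_mul_of_nonneg_right hr hb.le) (mul_le_mul_of_nonneg_right hr' ha.le)
    _ = (t + t') * (a * b) := by ring
    _ ≤ a * b := mul_le_of_le_one_left (mul_pos ha hb).le htt'

/-- Every schedule has rate at most `min_{i ∈ [1,N]} ℓ_i ℓ_{i+1} / (ℓ_i + ℓ_{i+1})`. -/
theorem rate_le_closed_form (N : ℕ) (hN : 1 ≤ N) (ℓ : ℕ → ℝ)
    (hℓ : ∀ i ∈ Finset.Icc 1 (N + 1), 0 < ℓ i)
    (lam : (Fin N → Bool) → ℝ) (hlam : ∀ s, 0 ≤ lam s) (hsum : (∑ s, lam s) = 1) :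
    rate N ℓ lam ≤
      (Finset.Icc 1 N).inf' (Finset.nonempty_Icc.mpr hN)
        (fun i => ℓ i * ℓ (i + 1) / (ℓ i + ℓ (i + 1))) := by
  refine le_inf' _ _ fun i hi => ?_
  obtain ⟨hi1, hiN⟩ := mem_Icc.1 hi
  have hmem : i ∈ Icc 1 (N + 1) := mem_Icc.2 ⟨hi1, by omega⟩
  have hmem' : i + 1 ∈ Icc 1 (N + 1) := mem_Icc.2 ⟨by omega, by omega⟩
  exact le_mul_div_add_of_le_mul_of_le_mul (hℓ i hmem) (hℓ (i + 1) hmem')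
    (inf'_le _ hmem) (inf'_le _ hmem') (hsum ▸ linkTime_add_linkTime_succ_le N lam hlam i)
end

section
/- Let β be the unique real root of the polynomial x³ − x − 1 = 0. Then there exist constants c₁ > 0 and c₂ > 0 such that for every integer N ≥ 1, c₁ · β^N ≤ T(N) ≤ c₂ · β^N; i.e., T(N) = Θ(β^N). -/
/-!
The largest element of a primitive punctured subset of `[1, n+3]` is `n+3` or `n+2`, and
deleting it gives a primitive punctured subset of `[1, n+1]` or `[1, n]` respectively,
bijectively. Hence `T (n+3) = T (n+1) + T n`, a recurrence with characteristic polynomial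
`x³ - x - 1`, and comparing `T` with `c * β ^ n` on the initial values `T 0 = T 1 = 1`,
`T 2 = 2` propagates the bounds to all `n`.
-/

open Finset

/-- A finite set of naturals is punctured if it contains no two consecutive integers. -/
def Punctured (H : Finset ℕ) : Prop := ∀ i ∈ H, i + 1 ∉ H

instance : DecidablePred Punctured := fun _ => Finset.decidableDforallFinset

/-- A primitive punctured subset of `[1,n]`: a punctured subset of `[1,n]` that is
maximal, i.e. no element of `[1,n]` can be added keeping it punctured. -/
def PrimitivePunctured (n : ℕ) (H : Finset ℕ) : Prop :=
  H ⊆ Finset.Icc 1 n ∧ Punctured H ∧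
    ∀ i ∈ Finset.Icc 1 n, i ∉ H → ¬ Punctured (insert i H)

instance (n : ℕ) : DecidablePred (PrimitivePunctured n) := fun _ => by
  unfold PrimitivePunctured; infer_instance

/-- `T n` is the number of primitive punctured subsets of `[1,n]`. -/
def T (n : ℕ) : ℕ := ((Finset.Icc 1 n).powerset.filter (PrimitivePunctured n)).card

theorem punctured_insert_iff {H : Finset ℕ} {i : ℕ} :
    Punctured (insert i H) ↔ Punctured H ∧ i + 1 ∉ H ∧ ∀ j ∈ H, j + 1 ≠ i := by
  simp only [Punctured, mem_insert]
  grind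

theorem primitivePunctured_iff {n : ℕ} {H : Finset ℕ} :
    PrimitivePunctured n H ↔ H ⊆ Icc 1 n ∧ Punctured H ∧
      ∀ i ∈ Icc 1 n, i ∉ H → i + 1 ∈ H ∨ ∃ j ∈ H, j + 1 = i := by
  unfold PrimitivePunctured
  refine and_congr_right fun _ => and_congr_right fun hH => ?_
  simp only [punctured_insert_iff, hH, true_and, not_and_or, not_not, not_forall, exists_prop]

-- Both `k + 1` and `k + 3` are blocked by `k + 2`, so primitivity is decided inside `[1, k]`.
theorem primitivePunctured_insert_add_two_iff {k m : ℕ} {H : Finset ℕ} (hkm : k + 2 ≤ m)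
    (hmk : m ≤ k + 3) (hH : H ⊆ Icc 1 k) :
    PrimitivePunctured m (insert (k + 2) H) ↔ PrimitivePunctured k H := by
  have hle : ∀ j ∈ H, 1 ≤ j ∧ j ≤ k := fun j hj => mem_Icc.mp (hH hj)
  have hp : Punctured (insert (k + 2) H) ↔ Punctured H := by
    rw [punctured_insert_iff]
    exact ⟨And.left, fun h => ⟨h, fun h' => by grind, fun j hj => by grind⟩⟩
  have hsub : insert (k + 2) H ⊆ Icc 1 m :=
    insert_subset (by simp; omega) (hH.trans (Icc_subset_Icc le_rfl (by omega)))
  simp only [primitivePunctured_iff, hp, hsub, hH, true_and, mem_insert, mem_Icc]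
  refine and_congr_right fun _ => ⟨fun h i hi hiH => ?_, fun h i hi hiH => ?_⟩
  · grind
  · grind

theorem PrimitivePunctured.mem_of_notMem {m : ℕ} {H : Finset ℕ}
    (h : PrimitivePunctured (m + 1) H) (hm : m + 1 ∉ H) : m ∈ H := by
  obtain ⟨hsub, hp, hmax⟩ := primitivePunctured_iff.mp h
  by_contra hmH
  rcases hmax (m + 1) (by simp) hm with h | ⟨j, hj, hjm⟩
  · simpa using hsub h
  · exact hmH (Nat.add_right_cancel hjm ▸ hj)

theorem primitivePunctured_add_three_iff {n : ℕ} {H : Finset ℕ} :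
    PrimitivePunctured (n + 3) H ↔
      (∃ H', PrimitivePunctured (n + 1) H' ∧ insert (n + 3) H' = H) ∨
        ∃ H', PrimitivePunctured n H' ∧ insert (n + 2) H' = H := by
  constructor
  · intro h
    obtain ⟨hsub, hp, -⟩ := primitivePunctured_iff.mp h
    have hle : ∀ j ∈ H, 1 ≤ j ∧ j ≤ n + 3 := fun j hj => mem_Icc.mp (hsub hj)
    by_cases hn3 : n + 3 ∈ H
    · have hH' : H.erase (n + 3) ⊆ Icc 1 (n + 1) := fun j hj => by
        have := hp (n + 2)
        grind
      refine Or.inl ⟨H.erase (n + 3), ?_, insert_erase hn3⟩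
      rwa [← primitivePunctured_insert_add_two_iff le_rfl (by omega) hH', insert_erase hn3]
    · have hn2 : n + 2 ∈ H := h.mem_of_notMem hn3
      have hH' : H.erase (n + 2) ⊆ Icc 1 n := fun j hj => by
        have := hp (n + 1)
        grind
      refine Or.inr ⟨H.erase (n + 2), ?_, insert_erase hn2⟩
      rwa [← primitivePunctured_insert_add_two_iff (by omega) le_rfl hH', insert_erase hn2]
  · rintro (⟨H', h, rfl⟩ | ⟨H', h, rfl⟩)
    · exact (primitivePunctured_insert_add_two_iff le_rfl (by omega) h.1).mpr h
    · exact (primitivePunctured_insert_add_two_iff (by omega) le_rfl h.1).mpr h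

def primitivePuncturedSets (n : ℕ) : Finset (Finset ℕ) :=
  (Icc 1 n).powerset.filter (PrimitivePunctured n)

theorem mem_primitivePuncturedSets {n : ℕ} {H : Finset ℕ} :
    H ∈ primitivePuncturedSets n ↔ PrimitivePunctured n H := by
  simpa [primitivePuncturedSets] using fun h => h.1

theorem injOn_insert_primitivePuncturedSets {a k : ℕ} (ha : a ∉ Icc 1 k) :
    Set.InjOn (insert a) (primitivePuncturedSets k : Set (Finset ℕ)) := by
  intro H hH H' hH' h
  have ha' : ∀ {H}, H ∈ primitivePuncturedSets k → a ∉ H :=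
    fun hH h' => ha ((mem_primitivePuncturedSets.mp hH).1 h')
  rw [← erase_insert (ha' hH), h, erase_insert (ha' hH')]

theorem primitivePuncturedSets_add_three (n : ℕ) :
    primitivePuncturedSets (n + 3) = (primitivePuncturedSets (n + 1)).image (insert (n + 3)) ∪
      (primitivePuncturedSets n).image (insert (n + 2)) := by
  ext H
  simp only [mem_union, mem_image, mem_primitivePuncturedSets, primitivePunctured_add_three_iff]

theorem T_add_three (n : ℕ) : T (n + 3) = T (n + 1) + T n := by
  have hdisj : Disjoint ((primitivePuncturedSets (n + 1)).image (insert (n + 3)))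
      ((primitivePuncturedSets n).image (insert (n + 2))) := by
    simp only [disjoint_left, mem_image, mem_primitivePuncturedSets]
    rintro _ ⟨H, -, rfl⟩ ⟨H', hH', hH'eq⟩
    have h : n + 3 ∈ insert (n + 2) H' := hH'eq ▸ mem_insert_self _ _
    rcases mem_insert.mp h with h | h
    · omega
    · simpa using hH'.1 h
  change (primitivePuncturedSets (n + 3)).card = (primitivePuncturedSets (n + 1)).card +
    (primitivePuncturedSets n).card
  rw [primitivePuncturedSets_add_three, card_union_of_disjoint hdisj,
    card_image_of_injOn (injOn_insert_primitivePuncturedSets (by simp)),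
    card_image_of_injOn (injOn_insert_primitivePuncturedSets (by simp))]

theorem le_of_padovan_recurrence {α : Type*} [AddCommMonoid α] [PartialOrder α]
    [IsOrderedAddMonoid α] {f g : ℕ → α} (hf : ∀ n, f (n + 3) = f (n + 1) + f n)
    (hg : ∀ n, g (n + 3) = g (n + 1) + g n) (h₀ : f 0 ≤ g 0) (h₁ : f 1 ≤ g 1) (h₂ : f 2 ≤ g 2)
    (n : ℕ) : f n ≤ g n := by
  induction n using Nat.strong_induction_on with
  | _ n ih =>
    match n, ih with
    | 0, _ => exact h₀
    | 1, _ => exact h₁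
    | 2, _ => exact h₂
    | n + 3, ih => rw [hf, hg]; exact add_le_add (ih _ (by omega)) (ih _ (by omega))

theorem const_mul_pow_padovan {β : ℝ} (hβ : β ^ 3 = β + 1) (c : ℝ) (n : ℕ) :
    c * β ^ (n + 3) = c * β ^ (n + 1) + c * β ^ n := by
  linear_combination c * β ^ n * hβ

theorem T_theta_beta_general (β : ℝ) (hroot : β ^ 3 - β - 1 = 0) :
    ∃ c₁ : ℝ, 0 < c₁ ∧ ∃ c₂ : ℝ, 0 < c₂ ∧
      ∀ N : ℕ, 1 ≤ N → c₁ * β ^ N ≤ (T N : ℝ) ∧ (T N : ℝ) ≤ c₂ * β ^ N := by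
  have hβ : β ^ 3 = β + 1 := by linarith
  have hβ₁ : 1 < β := by
    by_contra! h
    nlinarith [mul_nonneg (sub_nonneg.mpr h) (sq_nonneg (β + 1 / 2)), sq_nonneg (β + 1)]
  have hβ₂ : β < 2 := by nlinarith [mul_pos (sub_pos.mpr hβ₁) (sub_pos.mpr hβ₁)]
  have hT : ∀ n, (T (n + 3) : ℝ) = T (n + 1) + T n := fun n => by
    rw [T_add_three]; push_cast; ring
  have hT₀ : T 0 = 1 ∧ T 1 = 1 ∧ T 2 = 2 := by decide
  refine ⟨1 / 2, by norm_num, 2, by norm_num, fun N _ => ⟨?_, ?_⟩⟩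
  · refine le_of_padovan_recurrence (f := fun n => 1 / 2 * β ^ n) (g := fun n => (T n : ℝ))
      (const_mul_pow_padovan hβ _) hT ?_ ?_ ?_ N <;>
      simp only [hT₀, pow_zero, pow_one, Nat.cast_one, Nat.cast_ofNat] <;> nlinarith
  · refine le_of_padovan_recurrence (f := fun n => (T n : ℝ)) (g := fun n => 2 * β ^ n)
      hT (const_mul_pow_padovan hβ _) ?_ ?_ ?_ N <;>
      simp only [hT₀, pow_zero, pow_one, Nat.cast_one, Nat.cast_ofNat] <;> nlinarith

/-- `T(N) = Θ(β^N)`, where `β` is the unique real root of `x³ - x - 1 = 0`. -/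
theorem T_theta_beta (β : ℝ) (hroot : β ^ 3 - β - 1 = 0)
    (huniq : ∀ x : ℝ, x ^ 3 - x - 1 = 0 → x = β) :
    ∃ c₁ : ℝ, 0 < c₁ ∧ ∃ c₂ : ℝ, 0 < c₂ ∧
      ∀ N : ℕ, 1 ≤ N → c₁ * β ^ N ≤ (T N : ℝ) ∧ (T N : ℝ) ≤ c₂ * β ^ N :=
  T_theta_beta_general β hroot
end
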